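/- For all integers d ≥ 2 and j ≥ 0, t_{d,j} = 2·Σ_{l=0}^{j} D_{d-1,l}·t_{d-1,j-l}, and t_{1,0} = 1 (with the conventions D_{d-1,m} = 0 for m < 0 or m > 2^{d-2} − 1, and t_{d-1,m} = 0 for m < 0 or m > 2^{d-2} − 1). -/

import Mathlib

open scoped Classical
noncomputable section

namespace Treeplication

/-- Vertices of the Treeplication tree `T_d` (perfect binary tree with `d` layers),
heap-indexed `1,…,2^d−1`: the root is `1`, the children of `v` are `2v` and `2v+1`,
and the leaves (layer 1) are `2^{d-1},…,2^d−1`. -/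
def treeVerts (d : ℕ) : Finset ℕ := Finset.Ico 1 (2 ^ d)

/-- `y` is a leaf of `T_d`. -/
def IsLeaf (d y : ℕ) : Prop := 2 ^ (d - 1) ≤ y ∧ y < 2 ^ d

/-- The vector in `F_2^{2^{d-1}}` associated with vertex `v` of `T_d`: the indicator of
the set of leaves lying in the subtree rooted at `v` (the leaf with index `j` is the
vertex `2^{d-1}+j`, and `v` is an ancestor-or-equal of a vertex `w` iff `w / 2^t = v`
for some `t`). -/
def vecOf (d : ℕ) (v : ℕ) : Fin (2 ^ (d - 1)) → ZMod 2 :=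
  fun j => if ∃ t : ℕ, (2 ^ (d - 1) + (j : ℕ)) / 2 ^ t = v then 1 else 0

/-- A Treeplication subset `S` of `T_d` is decodable if the `F_2`-span of the vectors
associated with its vertices is all of `F_2^{2^{d-1}}`. -/
def TDecodable (d : ℕ) (S : Finset ℕ) : Prop :=
  Submodule.span (ZMod 2) (vecOf d '' (S : Set ℕ)) = ⊤


/-- `Dnum d j` : the number of decodable Treeplication subsets of `T_d` with exactly
`2^{d-1}+j` vertices (automatically `0` for `j < 0` or `j > 2^{d-1}-1`). -/
def Dnum (d : ℕ) (j : ℤ) : ℕ :=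
  ((treeVerts d).powerset.filter
    (fun S => (S.card : ℤ) = 2 ^ (d - 1) + j ∧ TDecodable d S)).card

/-- `tnum d j` : the number of decodable Treeplication subsets of `T_d` with exactly
`2^{d-1}+j` vertices that contain the root and are not decodable after removing it. -/
def tnum (d : ℕ) (j : ℤ) : ℕ :=
  ((treeVerts d).powerset.filter
    (fun S => (S.card : ℤ) = 2 ^ (d - 1) + j ∧ TDecodable d S ∧
      1 ∈ S ∧ ¬ TDecodable d (S.erase 1))).card

/-- `rnum d j` : the number of the remaining decodable Treeplication subsets of `T_d`
with exactly `2^{d-1}+j` vertices (those not containing the root, or still decodable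
after removing the root); `rnum d j = Dnum d j − tnum d j`. -/
def rnum (d : ℕ) (j : ℤ) : ℕ :=
  ((treeVerts d).powerset.filter
    (fun S => (S.card : ℤ) = 2 ^ (d - 1) + j ∧ TDecodable d S ∧
      ¬ (1 ∈ S ∧ ¬ TDecodable d (S.erase 1)))).card



/-- embed vertex `u` of `T_{d-1}` as vertex of subtree of child `2+b` of root of `T_d`. -/
def emb (b u : ℕ) : ℕ := u + (1 + b) * 2 ^ (Nat.size u - 1)

lemma size_spec {u k : ℕ} (h1 : 2 ^ k ≤ u) (h2 : u < 2 ^ (k + 1)) : Nat.size u = k + 1 := by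
  have ha : Nat.size u ≤ k + 1 := Nat.size_le.2 h2
  have hb : k < Nat.size u := Nat.lt_size.2 h1
  omega

lemma size_bounds {u : ℕ} (hu : 1 ≤ u) : 2 ^ (Nat.size u - 1) ≤ u ∧ u < 2 ^ (Nat.size u - 1 + 1) := by
  have h0 : 0 < Nat.size u := Nat.size_pos.2 hu
  constructor
  · exact Nat.lt_size.1 (by omega)
  · have := Nat.lt_size_self u
    have : u < 2 ^ Nat.size u := this
    have he : Nat.size u - 1 + 1 = Nat.size u := by omega
    rw [he]; exact this

lemma emb_bounds {b u : ℕ} (hu : 1 ≤ u) :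
    (2 + b) * 2 ^ (Nat.size u - 1) ≤ emb b u ∧ emb b u < (3 + b) * 2 ^ (Nat.size u - 1) := by
  obtain ⟨h1, h2⟩ := size_bounds hu
  unfold emb
  constructor
  · nlinarith [pow_pos (by norm_num : (0:ℕ) < 2) (Nat.size u - 1)]
  · have : u < 2 * 2 ^ (Nat.size u - 1) := by rw [pow_succ] at h2; omega
    nlinarith

lemma size_emb {b u : ℕ} (hb : b ≤ 1) (hu : 1 ≤ u) : Nat.size (emb b u) = Nat.size u + 1 := by
  obtain ⟨h1, h2⟩ := emb_bounds (b := b) hu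
  have h0 : 0 < Nat.size u := Nat.size_pos.2 hu
  have e1 : Nat.size u - 1 + 1 = Nat.size u := by omega
  have : 2 ^ (Nat.size u) ≤ emb b u ∧ emb b u < 2 ^ (Nat.size u + 1) := by
    constructor
    · calc 2 ^ Nat.size u = 2 * 2 ^ (Nat.size u - 1) := by rw [← pow_succ']; rw [e1]
        _ ≤ (2 + b) * 2 ^ (Nat.size u - 1) := by nlinarith [pow_pos (by norm_num : (0:ℕ) < 2) (Nat.size u - 1)]
        _ ≤ emb b u := h1
    · calc emb b u < (3 + b) * 2 ^ (Nat.size u - 1) := h2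
        _ ≤ 4 * 2 ^ (Nat.size u - 1) := by nlinarith [pow_pos (by norm_num : (0:ℕ) < 2) (Nat.size u - 1)]
        _ = 2 ^ (Nat.size u + 1) := by rw [show Nat.size u + 1 = (Nat.size u - 1) + 2 by omega]; ring
  exact size_spec this.1 this.2

lemma emb_pos {b u : ℕ} (hu : 1 ≤ u) : 2 ≤ emb b u := by
  have := (emb_bounds (b := b) hu).1
  nlinarith [Nat.one_le_two_pow (n := Nat.size u - 1)]

lemma emb_inj {b b' u w : ℕ} (hb : b ≤ 1) (hb' : b' ≤ 1) (hu : 1 ≤ u) (hw : 1 ≤ w)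
    (h : emb b u = emb b' w) : b = b' ∧ u = w := by
  have hs : Nat.size u = Nat.size w := by
    have h2 := size_emb hb hu; have h3 := size_emb hb' hw; rw [h] at h2; omega
  obtain ⟨hu1, hu2⟩ := size_bounds hu
  obtain ⟨hw1, hw2⟩ := size_bounds hw
  rw [hs] at hu1 hu2
  unfold emb at h
  rw [hs] at h
  have hp : 0 < 2 ^ (Nat.size w - 1) := pow_pos (by norm_num) _
  rw [pow_succ] at hu2 hw2
  interval_cases b <;> interval_cases b' <;> omega


lemma div_size_bounds {u t : ℕ} (hu : 1 ≤ u) (ht : t ≤ Nat.size u - 1) :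
    2 ^ (Nat.size u - 1 - t) ≤ u / 2 ^ t ∧ u / 2 ^ t < 2 ^ (Nat.size u - 1 - t + 1) := by
  obtain ⟨h1, h2⟩ := size_bounds hu
  constructor
  · rw [Nat.le_div_iff_mul_le (pow_pos (by norm_num) t), ← pow_add]
    calc 2 ^ (Nat.size u - 1 - t + t) = 2 ^ (Nat.size u - 1) := by congr 1; omega
      _ ≤ u := h1
  · rw [Nat.div_lt_iff_lt_mul (pow_pos (by norm_num) t), ← pow_add]
    calc u < 2 ^ (Nat.size u - 1 + 1) := h2
      _ = 2 ^ (Nat.size u - 1 - t + 1 + t) := by congr 1; omega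

lemma emb_div_le {b u t : ℕ} (hu : 1 ≤ u) (ht : t ≤ Nat.size u - 1) :
    emb b u / 2 ^ t = emb b (u / 2 ^ t) := by
  obtain ⟨h1, h2⟩ := div_size_bounds hu ht
  have hsz : Nat.size (u / 2 ^ t) = Nat.size u - 1 - t + 1 := size_spec h1 h2
  unfold emb
  rw [hsz]
  have hpow : (1 + b) * 2 ^ (Nat.size u - 1) = ((1 + b) * 2 ^ (Nat.size u - 1 - t)) * 2 ^ t := by
    rw [mul_assoc, ← pow_add]; congr 2; omega
  rw [hpow, Nat.add_mul_div_right _ _ (pow_pos (by norm_num) t)]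
  simp

lemma emb_div_size {b u : ℕ} (hb : b ≤ 1) (hu : 1 ≤ u) : emb b u / 2 ^ (Nat.size u) = 1 := by
  obtain ⟨h1, h2⟩ := emb_bounds (b := b) hu
  have h0 : 0 < Nat.size u := Nat.size_pos.2 hu
  have e1 : Nat.size u - 1 + 1 = Nat.size u := by omega
  have hl : 1 * 2 ^ Nat.size u ≤ emb b u := by
    rw [one_mul, ← e1, pow_succ]
    nlinarith [pow_pos (by norm_num : (0:ℕ) < 2) (Nat.size u - 1)]
  have hr : emb b u < 2 * 2 ^ Nat.size u := by
    rw [← e1, pow_succ]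
    nlinarith [pow_pos (by norm_num : (0:ℕ) < 2) (Nat.size u - 1)]
  exact Nat.div_eq_of_lt_le hl (by rw [show (1+1)*2^Nat.size u = 2^Nat.size u + 2^Nat.size u by ring]; omega)

lemma emb_div_gt {b u t : ℕ} (hb : b ≤ 1) (hu : 1 ≤ u) (ht : Nat.size u < t) :
    emb b u / 2 ^ t = 0 := by
  apply Nat.div_eq_of_lt
  calc emb b u < 2 ^ Nat.size (emb b u) := Nat.lt_size_self _
    _ = 2 ^ (Nat.size u + 1) := by rw [size_emb hb hu]
    _ ≤ 2 ^ t := Nat.pow_le_pow_right (by norm_num) (by omega)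

lemma anc_emb {b b' u w : ℕ} (hb : b ≤ 1) (hb' : b' ≤ 1) (hu : 1 ≤ u) (hw : 1 ≤ w) :
    (∃ t, emb b' w / 2 ^ t = emb b u) ↔ (b' = b ∧ ∃ t, w / 2 ^ t = u) := by
  constructor
  · rintro ⟨t, ht⟩
    rcases lt_or_ge (Nat.size w - 1) t with h | h
    · rcases Nat.lt_or_ge (Nat.size w) t with h2 | h2
      · rw [emb_div_gt hb' hw h2] at ht
        have := emb_pos (b := b) hu; omega
      · have : t = Nat.size w := by have := Nat.size_pos.2 hw; omega
        rw [this, emb_div_size hb' hw] at ht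
        have := emb_pos (b := b) hu; omega
    · rw [emb_div_le hw h] at ht
      have hdpos : 1 ≤ w / 2 ^ t := (div_size_bounds hw h).1.trans' (Nat.one_le_two_pow)
      obtain ⟨hbe, hue⟩ := emb_inj hb' hb hdpos hu ht
      exact ⟨hbe, t, hue⟩
  · rintro ⟨rfl, t, ht⟩
    have h2t : 2 ^ t ≤ w := by
      by_contra hc
      push_neg at hc
      rw [Nat.div_eq_of_lt hc] at ht; omega
    have hts : t ≤ Nat.size w - 1 := by
      have := Nat.lt_size.2 h2t; omega
    exact ⟨t, by rw [emb_div_le hw hts, ht]⟩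

lemma emb_mem {e b u : ℕ} (hb : b ≤ 1) (hu : 1 ≤ u) (hu2 : u < 2 ^ (e + 1)) :
    2 ≤ emb b u ∧ emb b u < 2 ^ (e + 2) := by
  refine ⟨emb_pos hu, ?_⟩
  calc emb b u < 2 ^ Nat.size (emb b u) := Nat.lt_size_self _
    _ = 2 ^ (Nat.size u + 1) := by rw [size_emb hb hu]
    _ ≤ 2 ^ (e + 2) := Nat.pow_le_pow_right (by norm_num) (by
        have := Nat.size_le.2 hu2; omega)

lemma emb_surj {e w : ℕ} (hw : 2 ≤ w) (hw2 : w < 2 ^ (e + 2)) :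
    ∃ b u, b ≤ 1 ∧ 1 ≤ u ∧ u < 2 ^ (e + 1) ∧ emb b u = w := by
  have hm : 2 ≤ Nat.size w := Nat.lt_size.2 (by simpa using hw)
  set k := Nat.size w - 2 with hk
  have hw1 : 2 ^ (k + 1) ≤ w := Nat.lt_size.1 (by omega)
  have hw2' : w < 2 ^ (k + 2) := by
    calc w < 2 ^ Nat.size w := Nat.lt_size_self w
      _ ≤ 2 ^ (k + 2) := Nat.pow_le_pow_right (by norm_num) (by omega)
  set q := w / 2 ^ k with hq
  have hp : (0:ℕ) < 2 ^ k := pow_pos (by norm_num) k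
  have hq2 : 2 ≤ q := by
    rw [hq, Nat.le_div_iff_mul_le hp]
    calc 2 * 2 ^ k = 2 ^ (k + 1) := (pow_succ' 2 k).symm
      _ ≤ w := hw1
  have hq4 : q < 4 := by
    rw [hq, Nat.div_lt_iff_lt_mul hp]
    calc w < 2 ^ (k + 2) := hw2'
      _ = 4 * 2 ^ k := by ring
  have hql : q * 2 ^ k ≤ w := Nat.div_mul_le_self w (2 ^ k)
  have hqr : w < (q + 1) * 2 ^ k := by
    rw [← Nat.div_lt_iff_lt_mul hp]; omega
  refine ⟨q - 2, w - (q - 1) * 2 ^ k, by omega, ?_, ?_, ?_⟩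
  · have : 2 ^ k ≤ w - (q - 1) * 2 ^ k := by interval_cases q <;> omega
    omega
  · have h2 : w - (q - 1) * 2 ^ k < 2 ^ (k + 1) := by
      have hpk : 2 ^ (k+1) = 2 * 2 ^ k := (pow_succ' 2 k)
      interval_cases q <;> omega
    calc w - (q - 1) * 2 ^ k < 2 ^ (k + 1) := h2
      _ ≤ 2 ^ (e + 1) := Nat.pow_le_pow_right (by norm_num) (by
          have := Nat.size_le.2 hw2; omega)
  · have hsz : Nat.size (w - (q - 1) * 2 ^ k) = k + 1 := by
      apply size_spec
      · interval_cases q <;> omega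
      · have hpk : 2 ^ (k+1+1) = 2 * (2 * 2 ^ k) := by rw [pow_succ, pow_succ]; ring
        interval_cases q <;> omega
    unfold emb
    rw [hsz]
    simp only [Nat.add_sub_cancel]
    interval_cases q <;> omega


variable {M N : Type*} [AddCommGroup M] [Module (ZMod 2) M] [AddCommGroup N] [Module (ZMod 2) N]

lemma char2 (x : M) : x + x = 0 := by
  rw [← two_smul (ZMod 2) x, show (2 : ZMod 2) = 0 by decide, zero_smul]

lemma zmod2_cases (a : ZMod 2) : a = 0 ∨ a = 1 := by revert a; decide

lemma span_image_equiv_top_iff (f : M ≃ₗ[ZMod 2] N) (s : Set M) :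
    Submodule.span (ZMod 2) (⇑f '' s) = ⊤ ↔ Submodule.span (ZMod 2) s = ⊤ := by
  rw [← LinearEquiv.coe_coe, Submodule.span_image]
  rw [LinearMap.map_eq_top_iff (f := (f : M →ₗ[ZMod 2] N)) (LinearMap.range_eq_top.2 f.surjective)]
  rw [LinearEquiv.ker, sup_bot_eq]

lemma span_inlr (sA : Set M) (sB : Set N) :
    Submodule.span (ZMod 2) ((fun x => (x, (0:N))) '' sA ∪ (fun y => ((0:M), y)) '' sB) =
      (Submodule.span (ZMod 2) sA).prod (Submodule.span (ZMod 2) sB) := by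
  rw [Submodule.span_union]
  rw [show (fun x => (x, (0:N))) = ⇑(LinearMap.inl (ZMod 2) M N) from rfl]
  rw [show (fun y => ((0:M), y)) = ⇑(LinearMap.inr (ZMod 2) M N) from rfl]
  rw [Submodule.span_image, Submodule.span_image, Submodule.map_inl, Submodule.map_inr]
  ext ⟨x, y⟩
  simp [Submodule.mem_sup, Submodule.mem_prod]

lemma span_pair_top_iff (sA : Set M) (sB : Set N) :
    Submodule.span (ZMod 2) ((fun x => (x, (0:N))) '' sA ∪ (fun y => ((0:M), y)) '' sB) = ⊤ ↔
      Submodule.span (ZMod 2) sA = ⊤ ∧ Submodule.span (ZMod 2) sB = ⊤ := by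
  rw [span_inlr, Submodule.prod_eq_top_iff]

lemma span_main (sA : Set M) (sB : Set N) (u : M) (v : N) :
    Submodule.span (ZMod 2)
      (insert (u, v) ((fun x => (x, (0:N))) '' sA ∪ (fun y => ((0:M), y)) '' sB)) = ⊤ ↔
    ((Submodule.span (ZMod 2) sA = ⊤ ∧ Submodule.span (ZMod 2) (insert v sB) = ⊤) ∨
     (Submodule.span (ZMod 2) (insert u sA) = ⊤ ∧ Submodule.span (ZMod 2) sB = ⊤)) := by
  have hmem : ∀ x : M × N,
      x ∈ Submodule.span (ZMod 2)
        (insert (u, v) ((fun x => (x, (0:N))) '' sA ∪ (fun y => ((0:M), y)) '' sB)) ↔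
      ((x.1 ∈ Submodule.span (ZMod 2) sA ∧ x.2 ∈ Submodule.span (ZMod 2) sB) ∨
       (x.1 + u ∈ Submodule.span (ZMod 2) sA ∧ x.2 + v ∈ Submodule.span (ZMod 2) sB)) := by
    intro x
    rw [Submodule.mem_span_insert]
    constructor
    · rintro ⟨a, z, hz, rfl⟩
      rw [span_inlr, Submodule.mem_prod] at hz
      rcases zmod2_cases a with rfl | rfl
      · left
        simpa using hz
      · right
        constructor
        · simp only [one_smul, Prod.fst_add]
          rw [show (u, v).1 + z.1 + u = z.1 + (u + u) from by abel, char2, add_zero]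
          exact hz.1
        · simp only [one_smul, Prod.snd_add]
          rw [show (u, v).2 + z.2 + v = z.2 + (v + v) from by abel, char2, add_zero]
          exact hz.2
    · rintro (⟨h1, h2⟩ | ⟨h1, h2⟩)
      · exact ⟨0, x, by rw [span_inlr, Submodule.mem_prod]; exact ⟨h1, h2⟩, by simp⟩
      · refine ⟨1, x + (u, v),
          by rw [span_inlr, Submodule.mem_prod]; exact ⟨by simpa using h1, by simpa using h2⟩, ?_⟩
        rw [one_smul, show (u, v) + (x + (u, v)) = x + ((u, v) + (u, v)) from by abel, char2,
          add_zero]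
  constructor
  · intro htop
    have hall : ∀ x : M × N,
        ((x.1 ∈ Submodule.span (ZMod 2) sA ∧ x.2 ∈ Submodule.span (ZMod 2) sB) ∨
         (x.1 + u ∈ Submodule.span (ZMod 2) sA ∧ x.2 + v ∈ Submodule.span (ZMod 2) sB)) :=
      fun x => (hmem x).1 (htop ▸ Submodule.mem_top)
    by_cases hPtop : Submodule.span (ZMod 2) sA = ⊤
    · left
      refine ⟨hPtop, ?_⟩
      rw [Submodule.eq_top_iff']
      intro y
      rcases hall (0, y) with ⟨_, h2⟩ | ⟨_, h2⟩
      · exact Submodule.span_mono (Set.subset_insert _ _) h2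
      · rw [Submodule.mem_span_insert]
        refine ⟨1, y + v, h2, ?_⟩
        rw [one_smul, show v + (y + v) = y + (v + v) from by abel, char2, add_zero]
    · right
      obtain ⟨x₀, hx₀⟩ : ∃ x₀, x₀ ∉ Submodule.span (ZMod 2) sA := by
        by_contra hc
        push_neg at hc
        exact hPtop (Submodule.eq_top_iff'.2 hc)
      have hv : ∀ y : N, y + v ∈ Submodule.span (ZMod 2) sB := by
        intro y
        rcases hall (x₀, y) with ⟨h1, _⟩ | ⟨_, h2⟩
        · exact absurd h1 hx₀
        · exact h2
      constructor
      · rw [Submodule.eq_top_iff']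
        intro x
        rcases hall (x, 0) with ⟨h1, _⟩ | ⟨h1, _⟩
        · exact Submodule.span_mono (Set.subset_insert _ _) h1
        · rw [Submodule.mem_span_insert]
          refine ⟨1, x + u, h1, ?_⟩
          rw [one_smul, show u + (x + u) = x + (u + u) from by abel, char2, add_zero]
      · rw [Submodule.eq_top_iff']
        intro z
        have := hv (z + v)
        rwa [add_assoc, char2, add_zero] at this
  · intro hcase
    rw [Submodule.eq_top_iff']
    intro x
    rw [hmem]
    rcases hcase with ⟨hPtop, hB⟩ | ⟨hA, hQtop⟩
    · have hx2 : x.2 ∈ Submodule.span (ZMod 2) (insert v sB) := hB ▸ Submodule.mem_top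
      rw [Submodule.mem_span_insert] at hx2
      obtain ⟨a, z, hz, hx2⟩ := hx2
      rcases zmod2_cases a with rfl | rfl
      · left
        exact ⟨hPtop ▸ Submodule.mem_top, by rw [hx2]; simpa using hz⟩
      · right
        refine ⟨hPtop ▸ Submodule.mem_top, ?_⟩
        rw [hx2, one_smul, show v + z + v = z + (v + v) from by abel, char2, add_zero]
        exact hz
    · have hx1 : x.1 ∈ Submodule.span (ZMod 2) (insert u sA) := hA ▸ Submodule.mem_top
      rw [Submodule.mem_span_insert] at hx1
      obtain ⟨a, z, hz, hx1⟩ := hx1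
      rcases zmod2_cases a with rfl | rfl
      · left
        exact ⟨by rw [hx1]; simpa using hz, hQtop ▸ Submodule.mem_top⟩
      · right
        refine ⟨?_, hQtop ▸ Submodule.mem_top⟩
        rw [hx1, one_smul, show u + z + u = z + (u + u) from by abel, char2, add_zero]
        exact hz



lemma pow_split (e : ℕ) : 2 ^ (e + 1) = 2 ^ e + 2 ^ e := by rw [pow_succ]; omega

def Φ (e : ℕ) :
    (Fin (2 ^ (e + 1)) → ZMod 2) ≃ₗ[ZMod 2]
      ((Fin (2 ^ e) → ZMod 2) × (Fin (2 ^ e) → ZMod 2)) where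
  toFun x := (fun i => x ⟨i.val, by have := i.isLt; have := pow_split e; omega⟩,
              fun i => x ⟨2 ^ e + i.val, by have := i.isLt; have := pow_split e; omega⟩)
  invFun p := fun j =>
    if h : (j : ℕ) < 2 ^ e then p.1 ⟨j, h⟩
    else p.2 ⟨(j : ℕ) - 2 ^ e, by have := j.isLt; have := pow_split e; omega⟩
  map_add' x y := rfl
  map_smul' c x := rfl
  left_inv x := by
    funext j
    dsimp only
    split_ifs with h
    · rfl
    · congr 1
      exact Fin.ext (by have := j.isLt; have := pow_split e; simp; omega)
  right_inv p := by
    ext i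
    · simp only
      rw [dif_pos i.isLt]
    · simp only
      rw [dif_neg (by omega)]
      congr 1
      exact Fin.ext (by simp)

lemma vecOf_root (d : ℕ) : vecOf d 1 = fun _ => 1 := by
  funext j
  unfold vecOf
  rw [if_pos]
  refine ⟨d - 1, Nat.div_eq_of_lt_le (by simpa using Nat.le_add_right _ _) ?_⟩
  have := j.isLt
  omega

lemma emb0_leaf {e i : ℕ} (hi : i < 2 ^ e) : emb 0 (2 ^ e + i) = 2 ^ (e + 1) + i := by
  have hsz : Nat.size (2 ^ e + i) = e + 1 :=
    size_spec (Nat.le_add_right _ _) (by have := pow_split e; omega)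
  unfold emb
  rw [hsz]
  simp only [Nat.add_sub_cancel]
  have := pow_split e
  omega

lemma emb1_leaf {e i : ℕ} (hi : i < 2 ^ e) : emb 1 (2 ^ e + i) = 2 ^ (e + 1) + (2 ^ e + i) := by
  have hsz : Nat.size (2 ^ e + i) = e + 1 :=
    size_spec (Nat.le_add_right _ _) (by have := pow_split e; omega)
  unfold emb
  rw [hsz]
  simp only [Nat.add_sub_cancel]
  have := pow_split e
  omega

lemma Phi_vec_emb0 {e u : ℕ} (hu : 1 ≤ u) :
    Φ e (vecOf (e + 2) (emb 0 u)) = (vecOf (e + 1) u, 0) := by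
  ext i
  · show vecOf (e + 2) (emb 0 u) ⟨i.val, _⟩ = vecOf (e + 1) u i
    unfold vecOf
    simp only [show e + 2 - 1 = e + 1 from rfl, show e + 1 - 1 = e from rfl]
    rw [show (2 : ℕ) ^ (e + 1) + (i : ℕ) = emb 0 (2 ^ e + i.val) from (emb0_leaf i.isLt).symm]
    rw [anc_emb (by norm_num) (by norm_num) hu (by have := Nat.one_le_two_pow (n := e); omega)]
    simp
  · show vecOf (e + 2) (emb 0 u) ⟨2 ^ e + i.val, _⟩ = 0
    unfold vecOf
    simp only [show e + 2 - 1 = e + 1 from rfl]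
    rw [show (2 : ℕ) ^ (e + 1) + (2 ^ e + i.val) = emb 1 (2 ^ e + i.val) from
      (emb1_leaf i.isLt).symm]
    rw [anc_emb (by norm_num) (by norm_num) hu (by have := Nat.one_le_two_pow (n := e); omega)]
    simp

lemma Phi_vec_emb1 {e u : ℕ} (hu : 1 ≤ u) :
    Φ e (vecOf (e + 2) (emb 1 u)) = (0, vecOf (e + 1) u) := by
  ext i
  · show vecOf (e + 2) (emb 1 u) ⟨i.val, _⟩ = 0
    unfold vecOf
    simp only [show e + 2 - 1 = e + 1 from rfl]
    rw [show (2 : ℕ) ^ (e + 1) + (i : ℕ) = emb 0 (2 ^ e + i.val) from (emb0_leaf i.isLt).symm]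
    rw [anc_emb (by norm_num) (by norm_num) hu (by have := Nat.one_le_two_pow (n := e); omega)]
    simp
  · show vecOf (e + 2) (emb 1 u) ⟨2 ^ e + i.val, _⟩ = vecOf (e + 1) u i
    unfold vecOf
    simp only [show e + 2 - 1 = e + 1 from rfl, show e + 1 - 1 = e from rfl]
    rw [show (2 : ℕ) ^ (e + 1) + (2 ^ e + i.val) = emb 1 (2 ^ e + i.val) from
      (emb1_leaf i.isLt).symm]
    rw [anc_emb (by norm_num) (by norm_num) hu (by have := Nat.one_le_two_pow (n := e); omega)]
    simp
lemma mem_treeVerts {d u : ℕ} : u ∈ treeVerts d ↔ 1 ≤ u ∧ u < 2 ^ d := Finset.mem_Ico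

lemma image_rep_noroot (e : ℕ) (A B : Finset ℕ) (hA : A ⊆ treeVerts (e + 1))
    (hB : B ⊆ treeVerts (e + 1)) :
    ⇑(Φ e) '' (vecOf (e + 2) '' ((A.image (emb 0) ∪ B.image (emb 1) : Finset ℕ) : Set ℕ)) =
      ((fun x => (x, (0 : Fin (2 ^ e) → ZMod 2))) '' (vecOf (e + 1) '' (A : Set ℕ)) ∪
       (fun y => ((0 : Fin (2 ^ e) → ZMod 2), y)) '' (vecOf (e + 1) '' (B : Set ℕ))) := by
  rw [Finset.coe_union, Finset.coe_image, Finset.coe_image, Set.image_union, Set.image_union]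
  congr 1
  · rw [← Set.image_comp, ← Set.image_comp, ← Set.image_comp]
    apply Set.image_congr
    intro u hu
    have h1 : 1 ≤ u := (mem_treeVerts.1 (hA hu)).1
    exact Phi_vec_emb0 h1
  · rw [← Set.image_comp, ← Set.image_comp, ← Set.image_comp]
    apply Set.image_congr
    intro u hu
    have h1 : 1 ≤ u := (mem_treeVerts.1 (hB hu)).1
    exact Phi_vec_emb1 h1

lemma TD_union_iff (e : ℕ) (A B : Finset ℕ) (hA : A ⊆ treeVerts (e + 1))
    (hB : B ⊆ treeVerts (e + 1)) :
    TDecodable (e + 2) (A.image (emb 0) ∪ B.image (emb 1)) ↔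
      TDecodable (e + 1) A ∧ TDecodable (e + 1) B := by
  unfold TDecodable
  rw [← span_image_equiv_top_iff (Φ e), image_rep_noroot e A B hA hB, span_pair_top_iff]

lemma TD_insert_iff (e : ℕ) (A B : Finset ℕ) (hA : A ⊆ treeVerts (e + 1))
    (hB : B ⊆ treeVerts (e + 1)) :
    TDecodable (e + 2) (insert 1 (A.image (emb 0) ∪ B.image (emb 1))) ↔
      ((TDecodable (e + 1) A ∧ TDecodable (e + 1) (insert 1 B)) ∨
       (TDecodable (e + 1) (insert 1 A) ∧ TDecodable (e + 1) B)) := by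
  unfold TDecodable
  rw [← span_image_equiv_top_iff (Φ e)]
  rw [Finset.coe_insert, Set.image_insert_eq, Set.image_insert_eq]
  rw [image_rep_noroot e A B hA hB]
  rw [show Φ e (vecOf (e + 2) 1) = (vecOf (e + 1) 1, vecOf (e + 1) 1) from by
    rw [vecOf_root, vecOf_root]; rfl]
  rw [Finset.coe_insert, Set.image_insert_eq, Finset.coe_insert, Set.image_insert_eq]
  exact span_main _ _ _ _

lemma one_not_mem_parts {e : ℕ} {A B : Finset ℕ} (hA : A ⊆ treeVerts (e + 1))
    (hB : B ⊆ treeVerts (e + 1)) : (1 : ℕ) ∉ A.image (emb 0) ∪ B.image (emb 1) := by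
  intro h
  rcases Finset.mem_union.1 h with h | h <;>
    obtain ⟨a, ha, hae⟩ := Finset.mem_image.1 h
  · have := emb_pos (b := 0) (mem_treeVerts.1 (hA ha)).1; omega
  · have := emb_pos (b := 1) (mem_treeVerts.1 (hB ha)).1; omega

lemma parts_disjoint {e : ℕ} {A B : Finset ℕ} (hA : A ⊆ treeVerts (e + 1))
    (hB : B ⊆ treeVerts (e + 1)) : Disjoint (A.image (emb 0)) (B.image (emb 1)) := by
  rw [Finset.disjoint_left]
  rintro w hw hw'
  obtain ⟨a, ha, rfl⟩ := Finset.mem_image.1 hw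
  obtain ⟨b, hb, hee⟩ := Finset.mem_image.1 hw'
  have := (emb_inj (by norm_num) (by norm_num) (mem_treeVerts.1 (hB hb)).1
    (mem_treeVerts.1 (hA ha)).1 hee).1
  omega

lemma rep_card {e : ℕ} {A B : Finset ℕ} (hA : A ⊆ treeVerts (e + 1))
    (hB : B ⊆ treeVerts (e + 1)) :
    (insert 1 (A.image (emb 0) ∪ B.image (emb 1))).card = 1 + A.card + B.card := by
  rw [Finset.card_insert_of_notMem (one_not_mem_parts hA hB),
    Finset.card_union_of_disjoint (parts_disjoint hA hB),
    Finset.card_image_of_injOn, Finset.card_image_of_injOn]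
  · omega
  · intro a ha b hb h
    exact (emb_inj (by norm_num) (by norm_num) (mem_treeVerts.1 (hB ha)).1
      (mem_treeVerts.1 (hB hb)).1 h).2
  · intro a ha b hb h
    exact (emb_inj (by norm_num) (by norm_num) (mem_treeVerts.1 (hA ha)).1
      (mem_treeVerts.1 (hA hb)).1 h).2

lemma rep_subset {e : ℕ} {A B : Finset ℕ} (hA : A ⊆ treeVerts (e + 1))
    (hB : B ⊆ treeVerts (e + 1)) :
    insert 1 (A.image (emb 0) ∪ B.image (emb 1)) ⊆ treeVerts (e + 2) := by
  intro w hw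
  rcases Finset.mem_insert.1 hw with rfl | hw
  · exact mem_treeVerts.2 ⟨le_refl 1, Nat.one_lt_two_pow (by omega)⟩
  · rcases Finset.mem_union.1 hw with h | h <;> obtain ⟨a, ha, rfl⟩ := Finset.mem_image.1 h
    · obtain ⟨h1, h2⟩ := mem_treeVerts.1 (hA ha)
      obtain ⟨g1, g2⟩ := emb_mem (b := 0) (by norm_num) h1 h2
      exact mem_treeVerts.2 ⟨by omega, g2⟩
    · obtain ⟨h1, h2⟩ := mem_treeVerts.1 (hB ha)
      obtain ⟨g1, g2⟩ := emb_mem (b := 1) (by norm_num) h1 h2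
      exact mem_treeVerts.2 ⟨by omega, g2⟩

lemma mem_rep_iff {e b : ℕ} (hb : b ≤ 1) {A B : Finset ℕ} (hA : A ⊆ treeVerts (e + 1))
    (hB : B ⊆ treeVerts (e + 1)) {u : ℕ} (hu : 1 ≤ u) :
    emb b u ∈ insert 1 (A.image (emb 0) ∪ B.image (emb 1)) ↔
      (b = 0 ∧ u ∈ A) ∨ (b = 1 ∧ u ∈ B) := by
  constructor
  · intro h
    rcases Finset.mem_insert.1 h with h | h
    · have := emb_pos (b := b) hu; omega
    · rcases Finset.mem_union.1 h with h | h <;> obtain ⟨a, ha, hae⟩ := Finset.mem_image.1 h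
      · obtain ⟨hbe, rfl⟩ := emb_inj (by norm_num) hb (mem_treeVerts.1 (hA ha)).1 hu hae
        exact Or.inl ⟨hbe.symm, ha⟩
      · obtain ⟨hbe, rfl⟩ := emb_inj (by norm_num) hb (mem_treeVerts.1 (hB ha)).1 hu hae
        exact Or.inr ⟨hbe.symm, ha⟩
  · rintro (⟨rfl, h⟩ | ⟨rfl, h⟩)
    · exact Finset.mem_insert_of_mem (Finset.mem_union_left _ (Finset.mem_image_of_mem _ h))
    · exact Finset.mem_insert_of_mem (Finset.mem_union_right _ (Finset.mem_image_of_mem _ h))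

lemma rep_unique {e : ℕ} {A B A' B' : Finset ℕ} (hA : A ⊆ treeVerts (e + 1))
    (hB : B ⊆ treeVerts (e + 1)) (hA' : A' ⊆ treeVerts (e + 1)) (hB' : B' ⊆ treeVerts (e + 1))
    (h : insert 1 (A.image (emb 0) ∪ B.image (emb 1)) =
      insert 1 (A'.image (emb 0) ∪ B'.image (emb 1))) : A = A' ∧ B = B' := by
  constructor
  · ext u
    by_cases hu : u ∈ treeVerts (e + 1)
    · have h1 := mem_rep_iff (b := 0) (by norm_num) hA hB (mem_treeVerts.1 hu).1
      have h2 := mem_rep_iff (b := 0) (by norm_num) hA' hB' (mem_treeVerts.1 hu).1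
      rw [h] at h1
      constructor
      · intro hm
        rcases h2.1 (h1.2 (Or.inl ⟨rfl, hm⟩)) with ⟨_, hm'⟩ | ⟨hc, _⟩
        · exact hm'
        · omega
      · intro hm
        rcases h1.1 (h2.2 (Or.inl ⟨rfl, hm⟩)) with ⟨_, hm'⟩ | ⟨hc, _⟩
        · exact hm'
        · omega
    · constructor
      · intro hm; exact absurd (hA hm) hu
      · intro hm; exact absurd (hA' hm) hu
  · ext u
    by_cases hu : u ∈ treeVerts (e + 1)
    · have h1 := mem_rep_iff (b := 1) (by norm_num) hA hB (mem_treeVerts.1 hu).1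
      have h2 := mem_rep_iff (b := 1) (by norm_num) hA' hB' (mem_treeVerts.1 hu).1
      rw [h] at h1
      constructor
      · intro hm
        rcases h2.1 (h1.2 (Or.inr ⟨rfl, hm⟩)) with ⟨hc, _⟩ | ⟨_, hm'⟩
        · omega
        · exact hm'
      · intro hm
        rcases h1.1 (h2.2 (Or.inr ⟨rfl, hm⟩)) with ⟨hc, _⟩ | ⟨_, hm'⟩
        · omega
        · exact hm'
    · constructor
      · intro hm; exact absurd (hB hm) hu
      · intro hm; exact absurd (hB' hm) hu

lemma rep_exists {e : ℕ} {S : Finset ℕ} (hS : S ⊆ treeVerts (e + 2)) (h1 : 1 ∈ S) :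
    ∃ A B : Finset ℕ, A ⊆ treeVerts (e + 1) ∧ B ⊆ treeVerts (e + 1) ∧
      S = insert 1 (A.image (emb 0) ∪ B.image (emb 1)) := by
  refine ⟨(treeVerts (e + 1)).filter (fun u => emb 0 u ∈ S),
    (treeVerts (e + 1)).filter (fun u => emb 1 u ∈ S),
    Finset.filter_subset _ _, Finset.filter_subset _ _, ?_⟩
  ext w
  constructor
  · intro hw
    rcases eq_or_ne w 1 with rfl | hne
    · exact Finset.mem_insert_self _ _
    · obtain ⟨hw1, hw2⟩ := mem_treeVerts.1 (hS hw)
      obtain ⟨b, u, hb, hu1, hu2, rfl⟩ := emb_surj (by omega) hw2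
      apply Finset.mem_insert_of_mem
      interval_cases b
      · exact Finset.mem_union_left _ (Finset.mem_image_of_mem _
          (Finset.mem_filter.2 ⟨mem_treeVerts.2 ⟨hu1, hu2⟩, hw⟩))
      · exact Finset.mem_union_right _ (Finset.mem_image_of_mem _
          (Finset.mem_filter.2 ⟨mem_treeVerts.2 ⟨hu1, hu2⟩, hw⟩))
  · intro hw
    rcases Finset.mem_insert.1 hw with rfl | hw
    · exact h1
    · rcases Finset.mem_union.1 hw with h | h <;> obtain ⟨a, ha, rfl⟩ := Finset.mem_image.1 h <;>
        exact (Finset.mem_filter.1 ha).2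

lemma TD_card_ge {d : ℕ} {S : Finset ℕ} (h : TDecodable d S) : 2 ^ (d - 1) ≤ S.card := by
  haveI : Fact (Nat.Prime 2) := ⟨by norm_num⟩
  unfold TDecodable at h
  rw [show vecOf d '' (S : Set ℕ) = ((S.image (vecOf d) : Finset _) : Set _) from
    (Finset.coe_image).symm] at h
  have h3 := finrank_span_finset_le_card (R := ZMod 2) (S.image (vecOf d))
  rw [Set.finrank] at h3
  rw [h] at h3
  rw [finrank_top] at h3
  rw [Module.finrank_pi] at h3
  simp at h3
  exact le_trans h3 Finset.card_image_le
def Dsets (d : ℕ) (j : ℤ) : Finset (Finset ℕ) :=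
  (treeVerts d).powerset.filter
    (fun S => (S.card : ℤ) = 2 ^ (d - 1) + j ∧ TDecodable d S)

def Tsets (d : ℕ) (j : ℤ) : Finset (Finset ℕ) :=
  (treeVerts d).powerset.filter
    (fun S => (S.card : ℤ) = 2 ^ (d - 1) + j ∧ TDecodable d S ∧
      1 ∈ S ∧ ¬ TDecodable d (S.erase 1))

lemma Dnum_eq (d : ℕ) (j : ℤ) : Dnum d j = (Dsets d j).card := rfl

lemma tnum_eq (d : ℕ) (j : ℤ) : tnum d j = (Tsets d j).card := rfl

lemma mem_Dsets {d : ℕ} {j : ℤ} {S : Finset ℕ} :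
    S ∈ Dsets d j ↔ S ⊆ treeVerts d ∧ ((S.card : ℤ) = 2 ^ (d - 1) + j ∧ TDecodable d S) := by
  unfold Dsets
  rw [Finset.mem_filter, Finset.mem_powerset]

lemma mem_Tsets {d : ℕ} {j : ℤ} {S : Finset ℕ} :
    S ∈ Tsets d j ↔ S ⊆ treeVerts d ∧ ((S.card : ℤ) = 2 ^ (d - 1) + j ∧ TDecodable d S ∧
      1 ∈ S ∧ ¬ TDecodable d (S.erase 1)) := by
  unfold Tsets
  rw [Finset.mem_filter, Finset.mem_powerset]

lemma castpow (e : ℕ) : ((2 : ℤ)) ^ e = ((2 ^ e : ℕ) : ℤ) := by push_cast; rfl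

/-- the forward maps -/
def frep (b : Bool) (σ : Σ _ : ℕ, Finset ℕ × Finset ℕ) : Finset ℕ :=
  if b then insert 1 ((σ.2.2.erase 1).image (emb 0) ∪ σ.2.1.image (emb 1))
  else insert 1 (σ.2.1.image (emb 0) ∪ (σ.2.2.erase 1).image (emb 1))

lemma frep_false (σ : Σ _ : ℕ, Finset ℕ × Finset ℕ) :
    frep false σ = insert 1 (σ.2.1.image (emb 0) ∪ (σ.2.2.erase 1).image (emb 1)) := rfl

lemma frep_true (σ : Σ _ : ℕ, Finset ℕ × Finset ℕ) :
    frep true σ = insert 1 ((σ.2.2.erase 1).image (emb 0) ∪ σ.2.1.image (emb 1)) := rfl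

lemma counting (e j : ℕ) :
    tnum (e + 2) (j : ℤ) =
      2 * ∑ l ∈ Finset.range (j + 1), Dnum (e + 1) (l : ℤ) * tnum (e + 1) ((j : ℤ) - l) := by
  classical
  have hps := pow_split e
  have hps1 := pow_split (e + 1)
  set Ω : Finset (Σ _ : ℕ, Finset ℕ × Finset ℕ) :=
    (Finset.range (j + 1)).sigma (fun l => Dsets (e + 1) (l : ℤ) ×ˢ Tsets (e + 1) ((j : ℤ) - l))
    with hΩ
  have hmemΩ : ∀ σ : Σ _ : ℕ, Finset ℕ × Finset ℕ, σ ∈ Ω ↔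
      σ.1 < j + 1 ∧ σ.2.1 ∈ Dsets (e + 1) (σ.1 : ℤ) ∧ σ.2.2 ∈ Tsets (e + 1) ((j : ℤ) - σ.1) := by
    intro σ
    rw [hΩ, Finset.mem_sigma, Finset.mem_product, Finset.mem_range]
  have hfacts : ∀ σ ∈ Ω,
      σ.2.1 ⊆ treeVerts (e + 1) ∧ (σ.2.2.erase 1) ⊆ treeVerts (e + 1) ∧
      TDecodable (e + 1) σ.2.1 ∧ TDecodable (e + 1) (insert 1 (σ.2.2.erase 1)) ∧
      ¬ TDecodable (e + 1) (σ.2.2.erase 1) ∧ (1 : ℕ) ∈ σ.2.2 ∧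
      σ.2.1.card = 2 ^ e + σ.1 ∧ σ.2.2.card = 2 ^ e + (j - σ.1) ∧ σ.1 ≤ j ∧
      1 ≤ σ.2.2.card := by
    intro σ hσ
    obtain ⟨hl, hD, hT⟩ := (hmemΩ σ).1 hσ
    obtain ⟨hDsub, hDcard, hDTD⟩ := mem_Dsets.1 hD
    obtain ⟨hTsub, hTcard, hTTD, hT1, hTnTD⟩ := mem_Tsets.1 hT
    have h1c : 1 ≤ σ.2.2.card := Finset.card_pos.2 ⟨1, hT1⟩
    have hi : insert 1 (σ.2.2.erase 1) = σ.2.2 := Finset.insert_erase hT1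
    simp only [show e + 1 - 1 = e from rfl, castpow] at hDcard hTcard
    refine ⟨hDsub, (Finset.erase_subset _ _).trans hTsub, hDTD, by rw [hi]; exact hTTD,
      hTnTD, hT1, by omega, by omega, by omega, h1c⟩
  -- images land in Tsets
  have hmem_im : ∀ b : Bool, ∀ σ ∈ Ω, frep b σ ∈ Tsets (e + 2) (j : ℤ) := by
    intro b σ hσ
    obtain ⟨hDsub, hBsub, hDTD, hTDiB, hnTDB, hT1, hDc, hTc, hlj, hTpos⟩ := hfacts σ hσ
    have hBc : (σ.2.2.erase 1).card = σ.2.2.card - 1 := Finset.card_erase_of_mem hT1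
    cases b
    · have hrepc := rep_card hDsub hBsub
      rw [frep_false, mem_Tsets]
      refine ⟨rep_subset hDsub hBsub, ?_, ?_, Finset.mem_insert_self _ _, ?_⟩
      · simp only [show e + 2 - 1 = e + 1 from rfl, castpow]
        omega
      · rw [TD_insert_iff e _ _ hDsub hBsub]
        exact Or.inl ⟨hDTD, hTDiB⟩
      · rw [Finset.erase_insert (one_not_mem_parts hDsub hBsub),
          TD_union_iff e _ _ hDsub hBsub]
        rintro ⟨_, hc⟩
        exact hnTDB hc
    · have hrepc := rep_card hBsub hDsub
      rw [frep_true, mem_Tsets]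
      refine ⟨rep_subset hBsub hDsub, ?_, ?_, Finset.mem_insert_self _ _, ?_⟩
      · simp only [show e + 2 - 1 = e + 1 from rfl, castpow]
        omega
      · rw [TD_insert_iff e _ _ hBsub hDsub]
        exact Or.inr ⟨hTDiB, hDTD⟩
      · rw [Finset.erase_insert (one_not_mem_parts hBsub hDsub),
          TD_union_iff e _ _ hBsub hDsub]
        rintro ⟨hc, _⟩
        exact hnTDB hc
  -- injectivity
  have hinj : ∀ b : Bool, Set.InjOn (frep b) ↑Ω := by
    intro b σ hσ τ hτ h
    obtain ⟨hDsub1, hBsub1, hDTD1, _, _, h1T1, hDc1, _, _, _⟩ := hfacts σ (Finset.mem_coe.1 hσ)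
    obtain ⟨hDsub2, hBsub2, hDTD2, _, _, h1T2, hDc2, _, _, _⟩ := hfacts τ (Finset.mem_coe.1 hτ)
    have hun : σ.2.1 = τ.2.1 ∧ σ.2.2.erase 1 = τ.2.2.erase 1 := by
      cases b
      · rw [frep_false, frep_false] at h
        exact rep_unique hDsub1 hBsub1 hDsub2 hBsub2 h
      · rw [frep_true, frep_true] at h
        have := rep_unique hBsub1 hDsub1 hBsub2 hDsub2 h
        exact ⟨this.2, this.1⟩
    have hST : σ.2.2 = τ.2.2 := by
      rw [← Finset.insert_erase h1T1, ← Finset.insert_erase h1T2, hun.2]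
    have hl : σ.1 = τ.1 := by
      have : σ.2.1.card = τ.2.1.card := by rw [hun.1]
      omega
    exact Sigma.ext hl (heq_of_eq (Prod.ext hun.1 hST))
  -- surjectivity
  have hunion : Tsets (e + 2) (j : ℤ) = Ω.image (frep false) ∪ Ω.image (frep true) := by
    apply Finset.Subset.antisymm
    · intro S hS
      obtain ⟨hSsub, hScard, hTD, h1S, hnTD⟩ := mem_Tsets.1 hS
      obtain ⟨A, B, hA, hB, rfl⟩ := rep_exists hSsub h1S
      have h1U : (1 : ℕ) ∉ A.image (emb 0) ∪ B.image (emb 1) := one_not_mem_parts hA hB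
      simp only [show e + 2 - 1 = e + 1 from rfl, castpow] at hScard
      have hrepc := rep_card hA hB
      rw [Finset.erase_insert h1U, TD_union_iff e A B hA hB] at hnTD
      rw [TD_insert_iff e A B hA hB] at hTD
      have h1TV : (1 : ℕ) ∈ treeVerts (e + 1) :=
        mem_treeVerts.2 ⟨le_refl 1, Nat.one_lt_two_pow (by omega)⟩
      rcases hTD with ⟨hTDA, hTDiB⟩ | ⟨hTDiA, hTDB⟩
      · have hnTDB : ¬ TDecodable (e + 1) B := fun hc => hnTD ⟨hTDA, hc⟩
        have h1B : (1 : ℕ) ∉ B := fun hc =>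
          hnTDB (by rwa [Finset.insert_eq_self.2 hc] at hTDiB)
        have hAc : 2 ^ e ≤ A.card := TD_card_ge hTDA
        have hSTc : 2 ^ e ≤ (insert 1 B).card := TD_card_ge hTDiB
        have hSTcard : (insert 1 B).card = B.card + 1 := Finset.card_insert_of_notMem h1B
        refine Finset.mem_union_left _ (Finset.mem_image.2
          ⟨⟨A.card - 2 ^ e, (A, insert 1 B)⟩, ?_, ?_⟩)
        · rw [hmemΩ]
          dsimp only
          refine ⟨by omega, mem_Dsets.2 ⟨hA, ?_, hTDA⟩,
            mem_Tsets.2 ⟨?_, ?_, hTDiB, Finset.mem_insert_self _ _, ?_⟩⟩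
          · simp only [show e + 1 - 1 = e from rfl, castpow]
            omega
          · exact Finset.insert_subset h1TV hB
          · simp only [show e + 1 - 1 = e from rfl, castpow]
            omega
          · rwa [Finset.erase_insert h1B]
        · show insert 1 (A.image (emb 0) ∪ ((insert 1 B).erase 1).image (emb 1)) = _
          rw [Finset.erase_insert h1B]
      · have hnTDA : ¬ TDecodable (e + 1) A := fun hc => hnTD ⟨hc, hTDB⟩
        have h1A : (1 : ℕ) ∉ A := fun hc =>
          hnTDA (by rwa [Finset.insert_eq_self.2 hc] at hTDiA)
        have hBc : 2 ^ e ≤ B.card := TD_card_ge hTDB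
        have hSTc : 2 ^ e ≤ (insert 1 A).card := TD_card_ge hTDiA
        have hSTcard : (insert 1 A).card = A.card + 1 := Finset.card_insert_of_notMem h1A
        refine Finset.mem_union_right _ (Finset.mem_image.2
          ⟨⟨B.card - 2 ^ e, (B, insert 1 A)⟩, ?_, ?_⟩)
        · rw [hmemΩ]
          dsimp only
          refine ⟨by omega, mem_Dsets.2 ⟨hB, ?_, hTDB⟩,
            mem_Tsets.2 ⟨?_, ?_, hTDiA, Finset.mem_insert_self _ _, ?_⟩⟩
          · simp only [show e + 1 - 1 = e from rfl, castpow]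
            omega
          · exact Finset.insert_subset h1TV hA
          · simp only [show e + 1 - 1 = e from rfl, castpow]
            omega
          · rwa [Finset.erase_insert h1A]
        · show insert 1 (((insert 1 A).erase 1).image (emb 0) ∪ B.image (emb 1)) = _
          rw [Finset.erase_insert h1A]
    · intro S hS
      rcases Finset.mem_union.1 hS with h | h <;> obtain ⟨σ, hσ, rfl⟩ := Finset.mem_image.1 h
      · exact hmem_im false σ hσ
      · exact hmem_im true σ hσ
  have hdisj : Disjoint (Ω.image (frep false)) (Ω.image (frep true)) := by
    rw [Finset.disjoint_left]
    rintro S hS0 hS1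
    obtain ⟨σ, hσ, hfσ⟩ := Finset.mem_image.1 hS0
    obtain ⟨τ, hτ, hfτ⟩ := Finset.mem_image.1 hS1
    obtain ⟨hDsub1, hBsub1, hDTD1, _, _, _, _, _, _, _⟩ := hfacts σ hσ
    obtain ⟨hDsub2, hBsub2, _, _, hnTDB2, _, _, _, _, _⟩ := hfacts τ hτ
    have h : frep false σ = frep true τ := by rw [hfσ, hfτ]
    rw [frep_false, frep_true] at h
    have := rep_unique hDsub1 hBsub1 hBsub2 hDsub2 h
    exact hnTDB2 (this.1 ▸ hDTD1)
  rw [tnum_eq, hunion, Finset.card_union_of_disjoint hdisj,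
    Finset.card_image_of_injOn (hinj false), Finset.card_image_of_injOn (hinj true),
    hΩ, Finset.card_sigma, two_mul]
  congr 1 <;>
  · apply Finset.sum_congr rfl
    intro l _
    rw [Finset.card_product, Dnum_eq, tnum_eq]
lemma TD_one : TDecodable 1 ({1} : Finset ℕ) := by
  unfold TDecodable
  rw [Finset.coe_singleton, Set.image_singleton, vecOf_root]
  rw [Submodule.eq_top_iff']
  intro x
  rw [Submodule.mem_span_singleton]
  refine ⟨x ⟨0, by norm_num⟩, ?_⟩
  funext i
  have : i = ⟨0, by norm_num⟩ := Fin.ext (by have := i.isLt; omega)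
  rw [this]
  simp

lemma nTD_empty : ¬ TDecodable 1 (∅ : Finset ℕ) := by
  unfold TDecodable
  rw [Finset.coe_empty, Set.image_empty, Submodule.span_empty]
  intro h
  have h1 : (fun _ => 1 : Fin (2 ^ (1 - 1)) → ZMod 2) ∈ (⊥ : Submodule (ZMod 2) _) := by
    rw [h]; exact Submodule.mem_top
  rw [Submodule.mem_bot] at h1
  have := congrFun h1 ⟨0, by norm_num⟩
  simp at this

lemma tnum_base : tnum 1 0 = 1 := by
  rw [tnum_eq]
  have h : Tsets 1 0 = {({1} : Finset ℕ)} := by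
    apply Finset.ext
    intro S
    rw [mem_Tsets, Finset.mem_singleton]
    constructor
    · rintro ⟨hsub, hcard, _, h1S, _⟩
      have hc : S.card = 1 := by exact_mod_cast hcard
      have hsub' : S ⊆ {1} := by
        intro x hx
        have := mem_treeVerts.1 (hsub hx)
        rw [Finset.mem_singleton]
        omega
      exact Finset.eq_of_subset_of_card_le hsub' (by simp [hc])
    · rintro rfl
      refine ⟨?_, by norm_num, TD_one, Finset.mem_singleton_self 1, ?_⟩
      · intro x hx
        rw [Finset.mem_singleton] at hx
        subst hx
        exact mem_treeVerts.2 ⟨le_refl 1, by norm_num⟩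
      · rw [Finset.erase_singleton]
        exact nTD_empty
  rw [h, Finset.card_singleton]

/-- Recursion for `t_{d,j}`: for all `d ≥ 2` and `j ≥ 0`,
`t_{d,j} = 2·Σ_{l=0}^{j} D_{d-1,l}·t_{d-1,j-l}`, and `t_{1,0} = 1` (the conventions
`D_{d-1,m} = 0` and `t_{d-1,m} = 0` for `m < 0` or `m > 2^{d-2}-1` hold automatically
for `Dnum` and `tnum`). -/
theorem tnum_recursion :
    (∀ d : ℕ, 2 ≤ d → ∀ j : ℕ,
      tnum d j = 2 * ∑ l ∈ Finset.range (j + 1), Dnum (d - 1) l * tnum (d - 1) ((j : ℤ) - l)) ∧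
    tnum 1 0 = 1 := by
  constructor
  · intro d hd j
    obtain ⟨e, rfl⟩ : ∃ e, d = e + 2 := ⟨d - 2, by omega⟩
    exact counting e j
  · exact tnum_base

end Treeplication
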